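/- arXiv:2309.17346 — 8 statements merged into one kernel-verified Lean document; each statement's English description precedes it below -/
import Mathlib

section
/- Every pmf in SB_d with support on exactly two antipodal points {x, 1_d - x}, each with mass 1/2, is an extreme point of the convex polytope SB_d; that is, it cannot be written as a convex combination λ g + (1-λ) h with g, h in SB_d, g ≠ h, and λ in (0,1). -/
/-!
If `f = l g + (1 - l) h` with `g, h ≥ 0` and `0 < l < 1`, then `g` and `h` vanish wherever `f`
does, so both are pmfs in `SB_d` supported on `{x, 1_d - x}`. There is only one such pmf: the
marginal at a coordinate where `x` is `1` puts mass `1/2` on `x`, and the total mass then puts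
`1/2` on `1_d - x` (for `d = 0`, `SB_0` is a single point). Hence `g = h`.
-/

open Finset

/-- A pmf on {0,1}^d with all one-dimensional marginals Bernoulli(1/2). -/
def isSB (d : ℕ) (f : (Fin d → Bool) → ℝ) : Prop :=
  (∀ x, 0 ≤ f x) ∧ (∑ x, f x = 1) ∧
    ∀ h : Fin d, ∑ x ∈ univ.filter (fun x => x h = true), f x = 1/2

lemma eq_zero_of_convex_comb_eq_zero {𝕜 : Type*} [Field 𝕜] [LinearOrder 𝕜]
    [IsStrictOrderedRing 𝕜] {l a b : 𝕜} (hl0 : 0 < l) (hl1 : l < 1)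
    (ha : 0 ≤ a) (hb : 0 ≤ b) (hab : l * a + (1 - l) * b = 0) : a = 0 ∧ b = 0 := by
  obtain ⟨hla, hlb⟩ := (add_eq_zero_iff_of_nonneg (mul_nonneg hl0.le ha)
    (mul_nonneg (sub_nonneg.2 hl1.le) hb)).1 hab
  exact ⟨(mul_eq_zero.1 hla).resolve_left hl0.ne',
    (mul_eq_zero.1 hlb).resolve_left (sub_ne_zero.2 hl1.ne')⟩

def SupportedOnAntipodalPair {d : ℕ} (x : Fin d → Bool) (g : (Fin d → Bool) → ℝ) : Prop :=
  ∀ y, y ≠ x → y ≠ (fun i => !x i) → g y = 0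

namespace SupportedOnAntipodalPair

variable {d : ℕ} {x : Fin d → Bool} {g : (Fin d → Bool) → ℝ}

lemma antipode (hg : SupportedOnAntipodalPair x g) :
    SupportedOnAntipodalPair (fun i => !x i) g := by
  intro y hy hy'
  exact hg y (by simpa using hy') hy

lemma sum_eq_apply_of_mem {s : Finset (Fin d → Bool)} (hg : SupportedOnAntipodalPair x g)
    (hx : x ∈ s) (hxc : (fun i => !x i) ∉ s) : ∑ y ∈ s, g y = g x :=
  sum_eq_single_of_mem x hx fun y hy hyx => hg y hyx (ne_of_mem_of_not_mem hy hxc)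

end SupportedOnAntipodalPair

namespace isSB

variable {d : ℕ} {x : Fin d → Bool} {g h : (Fin d → Bool) → ℝ}

lemma apply_eq_half_of_coord_true (hg : isSB d g) (hsupp : SupportedOnAntipodalPair x g)
    {i : Fin d} (hxi : x i = true) : g x = 1/2 := by
  rw [← hg.2.2 i, hsupp.sum_eq_apply_of_mem (by simpa using hxi) (by simp [hxi])]

lemma add_antipode_eq_one (hd : 0 < d) (hg : isSB d g) (hsupp : SupportedOnAntipodalPair x g) :
    g x + g (fun i => !x i) = 1 := by
  have hne : x ≠ fun i => !x i := fun h => by simpa using congrFun h ⟨0, hd⟩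
  rw [← hg.2.1, ← sum_pair hne]
  refine sum_subset (subset_univ _) fun y _ hy => ?_
  simp only [mem_insert, mem_singleton, not_or] at hy
  exact hsupp y hy.1 hy.2

lemma apply_eq_half (hd : 0 < d) (hg : isSB d g) (hsupp : SupportedOnAntipodalPair x g) :
    g x = 1/2 := by
  cases hxi : x ⟨0, hd⟩
  · have hxc : g (fun i => !x i) = 1/2 :=
      hg.apply_eq_half_of_coord_true hsupp.antipode (i := ⟨0, hd⟩) (by simp [hxi])
    linarith [hg.add_antipode_eq_one hd hsupp]
  · exact hg.apply_eq_half_of_coord_true hsupp hxi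

theorem eq_of_supportedOnAntipodalPair (hg : isSB d g) (hh : isSB d h)
    (hgs : SupportedOnAntipodalPair x g) (hhs : SupportedOnAntipodalPair x h) : g = h := by
  funext y
  rcases Nat.eq_zero_or_pos d with rfl | hd
  · rw [← Fintype.sum_subsingleton g y, ← Fintype.sum_subsingleton h y, hg.2.1, hh.2.1]
  by_cases hyx : y = x
  · subst hyx
    rw [hg.apply_eq_half hd hgs, hh.apply_eq_half hd hhs]
  by_cases hyxc : y = fun i => !x i
  · subst hyxc
    rw [hg.apply_eq_half hd hgs.antipode, hh.apply_eq_half hd hhs.antipode]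
  rw [hgs y hyx hyxc, hhs y hyx hyxc]

end isSB

theorem stmt_2_general (d : ℕ) (f : (Fin d → Bool) → ℝ) (x : Fin d → Bool)
    (h0 : ∀ y, y ≠ x → y ≠ (fun i => !x i) → f y = 0) :
    ¬ ∃ (g h : (Fin d → Bool) → ℝ) (l : ℝ), isSB d g ∧ isSB d h ∧ g ≠ h ∧
        0 < l ∧ l < 1 ∧ ∀ y, f y = l * g y + (1 - l) * h y := by
  rintro ⟨g, h, l, hg, hh, hne, hl0, hl1, hf⟩
  have hvanish : ∀ y, y ≠ x → y ≠ (fun i => !x i) → g y = 0 ∧ h y = 0 := fun y hyx hyxc =>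
    eq_zero_of_convex_comb_eq_zero hl0 hl1 (hg.1 y) (hh.1 y) ((hf y).symm.trans (h0 y hyx hyxc))
  exact hne (hg.eq_of_supportedOnAntipodalPair hh
    (fun y hyx hyxc => (hvanish y hyx hyxc).1) (fun y hyx hyxc => (hvanish y hyx hyxc).2))

/-- a pmf in SB_d supported on exactly two antipodal points, each with
mass 1/2, is an extreme point of the convex polytope SB_d. -/
theorem stmt_2 (d : ℕ) (f : (Fin d → Bool) → ℝ) (x : Fin d → Bool)
    (hSB : isSB d f)
    (hx : f x = 1/2) (hxc : f (fun i => !x i) = 1/2)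
    (h0 : ∀ y, y ≠ x → y ≠ (fun i => !x i) → f y = 0) :
    ¬ ∃ (g h : (Fin d → Bool) → ℝ) (l : ℝ), isSB d g ∧ isSB d h ∧ g ≠ h ∧
        0 < l ∧ l < 1 ∧ ∀ y, f y = l * g y + (1 - l) * h y :=
  stmt_2_general d f x h0
end

section
/- Let X = (X_1,...,X_d) be a random vector with pmf in SB_d such that the sum S = X_1 + ... + X_d is minimal in convex order within SB_d. Then the support of the pmf of X is contained in the set of binary vectors x with sum of components equal to d/2 if d is even, or equal to (d-1)/2 or (d+1)/2 if d is odd. -/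
open Finset

/-- Number of ones (sum of the components) of a binary vector. -/
def sumC {d : ℕ} (x : Fin d → Bool) : ℕ :=
  (univ.filter (fun i => x i = true)).card

/-- f is a Σ_cx-smallest element of SB_d: the sum of the components is minimal in
convex order over the class. -/
def SigmaCxSmallest (d : ℕ) (f : (Fin d → Bool) → ℝ) : Prop :=
  isSB d f ∧ ∀ g, isSB d g → ∀ φ : ℝ → ℝ, ConvexOn ℝ Set.univ φ →
    ∑ x, f x * φ (sumC x) ≤ ∑ x, g x * φ (sumC x)

/-! Take `φ t = |2 t - d|`. On integers `φ ≥ d % 2`, with equality exactly at `⌊d/2⌋` and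
`⌈d/2⌉`. A vector with `⌊d/2⌋` ones and its complement, each with mass `1/2`, form a pmf in
`SB_d` with `E φ(S) = d % 2`; minimality of `f` forces `E_f φ(S) ≤ d % 2`, so `φ(S) = d % 2` on
the support of `f`. -/

lemma sumC_not {d : ℕ} (x : Fin d → Bool) : sumC (fun i => !x i) = d - sumC x := by
  have := Finset.card_filter_add_card_filter_not (s := univ) (fun i : Fin d => x i = true)
  simp only [card_univ, Fintype.card_fin, Bool.not_eq_true] at this
  simp only [sumC, Bool.not_eq_true']
  omega

lemma exists_sumC_eq {d k : ℕ} (hk : k ≤ d) : ∃ x : Fin d → Bool, sumC x = k :=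
  ⟨fun i => decide ((i : ℕ) < k), by
    simpa [sumC, hk] using Fin.card_filter_val_lt (n := d) (m := k)⟩

noncomputable def antipodalPair {d : ℕ} (x : Fin d → Bool) : (Fin d → Bool) → ℝ :=
  fun y => ((if y = x then 1 else 0) + (if y = (fun i => !x i) then 1 else 0)) / 2

lemma sum_antipodalPair_mul {d : ℕ} (x : Fin d → Bool) (ψ : (Fin d → Bool) → ℝ) :
    ∑ y, antipodalPair x y * ψ y = (ψ x + ψ (fun i => !x i)) / 2 := by
  simp only [antipodalPair, add_div, add_mul, ite_div, ite_mul, zero_div, zero_mul,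
    Finset.sum_add_distrib, Finset.sum_ite_eq', Finset.mem_univ, if_true]
  ring

lemma isSB_antipodalPair {d : ℕ} (x : Fin d → Bool) : isSB d (antipodalPair x) := by
  refine ⟨fun y => by unfold antipodalPair; positivity, ?_, fun h => ?_⟩
  · simpa using sum_antipodalPair_mul x 1
  · have := sum_antipodalPair_mul x (fun y => if y h = true then 1 else 0)
    simp only [mul_ite, mul_one, mul_zero] at this
    rw [Finset.sum_filter, this]
    rcases Bool.eq_false_or_eq_true (x h) with hxh | hxh <;> norm_num [hxh]

lemma abs_two_mul_sub_cast (s d : ℕ) : |2 * (s : ℝ) - d| = ((|2 * (s : ℤ) - d| : ℤ) : ℝ) := by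
  push_cast; rfl

lemma mod_two_le_abs_two_mul_sub (s d : ℕ) : ((d % 2 : ℕ) : ℝ) ≤ |2 * (s : ℝ) - d| := by
  rw [abs_two_mul_sub_cast, ← Int.cast_natCast (d % 2), Int.cast_le, le_abs]
  omega

lemma abs_two_mul_sub_eq_mod_two_iff (s d : ℕ) :
    |2 * (s : ℝ) - d| = ((d % 2 : ℕ) : ℝ) ↔ s = d / 2 ∨ s = (d + 1) / 2 := by
  rw [abs_two_mul_sub_cast, ← Int.cast_natCast (d % 2), Int.cast_inj, abs_eq (by positivity)]
  omega

lemma convexOn_abs_two_mul_sub (c : ℝ) : ConvexOn ℝ Set.univ (fun t : ℝ => |2 * t - c|) := by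
  simpa [Function.comp_def] using (convexOn_univ_norm (E := ℝ)).comp_affineMap
    ((2 : ℝ) • AffineMap.id ℝ ℝ - AffineMap.const ℝ ℝ c)

lemma eq_of_sum_mul_le_of_le {α : Type*} [Fintype α] {f ψ : α → ℝ} {c : ℝ}
    (hf0 : ∀ x, 0 ≤ f x) (hf1 : ∑ x, f x = 1) (hψ : ∀ x, c ≤ ψ x)
    (hsum : ∑ x, f x * ψ x ≤ c) {x : α} (hx : f x ≠ 0) : ψ x = c := by
  have hterm : ∀ y ∈ univ, 0 ≤ f y * (ψ y - c) := fun y _ =>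
    mul_nonneg (hf0 y) (sub_nonneg.2 (hψ y))
  have hdefect : ∑ y, f y * (ψ y - c) = 0 := by
    refine le_antisymm ?_ (Finset.sum_nonneg hterm)
    simp only [mul_sub, Finset.sum_sub_distrib, ← Finset.sum_mul, hf1, one_mul]
    linarith
  have := (Finset.sum_eq_zero_iff_of_nonneg hterm).1 hdefect x (Finset.mem_univ x)
  linarith [(mul_eq_zero.1 this).resolve_left hx]

/-- the support of a Σ_cx-smallest pmf in SB_d is contained in the set of
binary vectors whose components sum to d/2 (d even) or (d-1)/2 or (d+1)/2 (d odd). -/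
theorem stmt_3 (d : ℕ) (f : (Fin d → Bool) → ℝ) (hf : SigmaCxSmallest d f) :
    ∀ x, f x ≠ 0 →
      (Even d → sumC x = d / 2) ∧
      (Odd d → sumC x = (d - 1) / 2 ∨ sumC x = (d + 1) / 2) := by
  obtain ⟨⟨hf0, hf1, -⟩, hmin⟩ := hf
  intro x hx
  obtain ⟨x₀, hx₀⟩ := exists_sumC_eq (Nat.div_le_self d 2)
  have hpair : ∑ y, antipodalPair x₀ y * |2 * (sumC y : ℝ) - d| = ((d % 2 : ℕ) : ℝ) := by
    rw [sum_antipodalPair_mul, sumC_not, hx₀,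
      (abs_two_mul_sub_eq_mod_two_iff _ d).2 (.inl rfl),
      (abs_two_mul_sub_eq_mod_two_iff _ d).2 (.inr (by omega))]
    ring
  have hbalanced := eq_of_sum_mul_le_of_le (ψ := fun y => |2 * (sumC y : ℝ) - d|) hf0 hf1
    (fun y => mod_two_le_abs_two_mul_sub _ d)
    ((hmin _ (isSB_antipodalPair x₀) _ (convexOn_abs_two_mul_sub d)).trans hpair.le) hx
  rw [abs_two_mul_sub_eq_mod_two_iff] at hbalanced
  rw [Nat.even_iff, Nat.odd_iff]
  omega
end

section
/- If d is even, a random vector X with pmf in SB_d is a Σ_cx-smallest element of SB_d if and only if P(X_1 + ... + X_d = d/2) = 1 (i.e., X is a joint mix with center d/2). -/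
open Finset

/-!
Every `g ∈ SB_d` gives its component sum the mean `d / 2`, so by Jensen
`φ (d / 2) ≤ E_g φ(S)` for convex `φ`, with equality when `S = d / 2` almost surely.
Conversely, for even `d` the mixture of a vector with `d / 2` ones and its complement lies in
`SB_d` and is such a joint mix; testing a smallest `f` against it with `φ t = |t - d / 2|`
forces `E_f |S - d / 2| = 0`.
-/

section WeightedSums

variable {α : Type*} [Fintype α]

lemma sum_mul_comp_eq_of_forall_ne_zero {f : α → ℝ} (hf : ∑ x, f x = 1) (S : α → ℝ) {c : ℝ}
    (hS : ∀ x, f x ≠ 0 → S x = c) (φ : ℝ → ℝ) : ∑ x, f x * φ (S x) = φ c := by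
  calc ∑ x, f x * φ (S x) = ∑ x, f x * φ c := by
        refine sum_congr rfl fun x _ => ?_
        by_cases hx : f x = 0
        · simp [hx]
        · rw [hS x hx]
    _ = φ c := by rw [← sum_mul, hf, one_mul]

lemma eq_of_sum_mul_dist_nonpos {f : α → ℝ} (hf : ∀ x, 0 ≤ f x) {S : α → ℝ} {c : ℝ}
    (hsum : ∑ x, f x * dist (S x) c ≤ 0) {x : α} (hx : f x ≠ 0) : S x = c := by
  have hnonneg : ∀ y ∈ univ, 0 ≤ f y * dist (S y) c := fun y _ => mul_nonneg (hf y) dist_nonneg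
  have hzero := (sum_eq_zero_iff_of_nonneg hnonneg).mp
    (le_antisymm hsum (sum_nonneg hnonneg)) x (mem_univ x)
  exact dist_eq_zero.mp ((mul_eq_zero.mp hzero).resolve_left hx)

end WeightedSums

lemma sumC_add_sumC_compl {d : ℕ} (x : Fin d → Bool) : sumC x + sumC xᶜ = d := by
  simpa [sumC, Pi.compl_apply] using
    card_filter_add_card_filter_not (s := (univ : Finset (Fin d))) (fun i => x i = true)

lemma isSB.sum_mul_sumC {d : ℕ} {g : (Fin d → Bool) → ℝ} (hg : isSB d g) :
    ∑ x, g x * (sumC x : ℝ) = d / 2 := by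
  calc ∑ x, g x * (sumC x : ℝ) = ∑ x, ∑ i, if x i = true then g x else 0 := by
        refine sum_congr rfl fun x _ => ?_
        rw [sumC, card_filter, Nat.cast_sum, mul_sum]
        exact sum_congr rfl fun i _ => by split <;> simp
    _ = ∑ i, ∑ x, if x i = true then g x else 0 := sum_comm
    _ = ∑ _i : Fin d, (1 / 2 : ℝ) := sum_congr rfl fun i _ => by rw [← sum_filter, hg.2.2 i]
    _ = d / 2 := by simp [div_eq_mul_inv]

lemma isSB.le_sum_mul_comp {d : ℕ} {g : (Fin d → Bool) → ℝ} (hg : isSB d g) {φ : ℝ → ℝ}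
    (hφ : ConvexOn ℝ Set.univ φ) : φ (d / 2) ≤ ∑ x, g x * φ (sumC x) := by
  simpa only [smul_eq_mul, hg.sum_mul_sumC] using
    hφ.map_sum_le (fun x _ => hg.1 x) hg.2.1 (fun x _ => Set.mem_univ ((sumC x : ℝ)))

noncomputable def antipodalMix {d : ℕ} (x₀ : Fin d → Bool) : (Fin d → Bool) → ℝ :=
  fun x => (if x = x₀ then 1 / 2 else 0) + (if x = x₀ᶜ then 1 / 2 else 0)

lemma isSB_antipodalMix {d : ℕ} (x₀ : Fin d → Bool) : isSB d (antipodalMix x₀) := by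
  refine ⟨fun x => by unfold antipodalMix; positivity, ?_, fun h => ?_⟩
  · simp only [antipodalMix, sum_add_distrib, sum_ite_eq', mem_univ, if_true]
    norm_num
  · simp only [antipodalMix, sum_add_distrib, sum_ite_eq', mem_filter, mem_univ, true_and,
      Pi.compl_apply, Bool.compl_eq_bnot]
    cases x₀ h <;> norm_num

lemma sumC_eq_of_antipodalMix_ne_zero {d : ℕ} (hd : Even d) {x₀ : Fin d → Bool}
    (hx₀ : sumC x₀ = d / 2) {x : Fin d → Bool} (hx : antipodalMix x₀ x ≠ 0) :
    sumC x = d / 2 := by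
  have hcompl := sumC_add_sumC_compl x₀
  obtain ⟨k, rfl⟩ := hd
  by_cases h₀ : x = x₀
  · rw [h₀, hx₀]
  by_cases h₁ : x = x₀ᶜ
  · rw [h₁]; omega
  simp [antipodalMix, h₀, h₁] at hx

/-- if d is even, f in SB_d is Σ_cx-smallest iff the sum of components
equals d/2 with probability one (joint mix with center d/2). -/
theorem stmt_4 (d : ℕ) (hd : Even d) (f : (Fin d → Bool) → ℝ) :
    SigmaCxSmallest d f ↔ (isSB d f ∧ ∀ x, f x ≠ 0 → sumC x = d / 2) := by
  have hcenter : ((d / 2 : ℕ) : ℝ) = d / 2 := Nat.cast_div (even_iff_two_dvd.mp hd) two_ne_zero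
  constructor
  · rintro ⟨hf, hmin⟩
    obtain ⟨x₀, hx₀⟩ := exists_sumC_eq (Nat.div_le_self d 2)
    have hmix : ∑ x, antipodalMix x₀ x * dist (sumC x : ℝ) (d / 2) = 0 := by
      rw [sum_mul_comp_eq_of_forall_ne_zero (isSB_antipodalMix x₀).2.1 (fun x => (sumC x : ℝ))
        (fun x hx => by rw [sumC_eq_of_antipodalMix_ne_zero hd hx₀ hx, hcenter])
        (fun t => dist t ((d : ℝ) / 2)), dist_self]
    have hle := hmin _ (isSB_antipodalMix x₀) _ (convexOn_univ_dist ((d : ℝ) / 2))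
    refine ⟨hf, fun x hx => ?_⟩
    exact_mod_cast (eq_of_sum_mul_dist_nonpos hf.1 (hle.trans hmix.le) hx).trans hcenter.symm
  · rintro ⟨hf, hsupp⟩
    refine ⟨hf, fun g hg φ hφ => ?_⟩
    rw [sum_mul_comp_eq_of_forall_ne_zero hf.2.1 (fun x => (sumC x : ℝ))
      (fun x hx => by rw [hsupp x hx, hcenter])]
    exact hg.le_sum_mul_comp hφ
end

section
/- Let X be a Bernoulli random vector in SB_d supported on two antipodal points {x, 1_d - x} with P(X=x)=P(X=1_d - x)=1/2, where the components of x sum to ⌊d/2⌋. Let U be standard uniform independent of X and V = U X + (1-U)(1_d - X). Then for every subset I of {1,...,d}, the pair (Σ_{j∈I} V_j, Σ_{j∉I} V_j) is countermonotonic; i.e., V is Σ-countermonotonic. -/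
/-!
On the event `X ∈ {x, 1 - x}`, which has full probability, every partial sum of `V` is affine
in one scalar `w` (namely `U` or `1 - U`):
`∑_{j ∈ s} V_j = (#s - ∑_{j ∈ s} x_j) + w (2 ∑_{j ∈ s} x_j - #s)`.
Hence the product of the increments of the sums over `I` and over `Iᶜ` between two outcomes is
`(w₁ - w₂)² α β` with `α = 2 ∑_I x - #I`, `β = 2 ∑_{Iᶜ} x - #Iᶜ`. These are integers with
`α + β = 2 ⌊d/2⌋ - d ∈ {-1, 0}`, which forces `α β ≤ 0`.
-/

open MeasureTheory ProbabilityTheory Finset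

theorem Int.mul_nonpos_of_neg_one_le_add {a b : ℤ} (h₁ : -1 ≤ a + b) (h₂ : a + b ≤ 0) :
    a * b ≤ 0 := by
  rcases le_or_gt 0 a with ha | ha
  · exact mul_nonpos_of_nonneg_of_nonpos ha (by omega)
  · exact mul_nonpos_of_nonpos_of_nonneg ha.le (by omega)

theorem sub_mul_sub_nonpos_of_affine {a b α β : ℝ} (w₁ w₂ : ℝ) (h : α * β ≤ 0) :
    ((a + w₁ * α) - (a + w₂ * α)) * ((b + w₁ * β) - (b + w₂ * β)) ≤ 0 := by
  calc ((a + w₁ * α) - (a + w₂ * α)) * ((b + w₁ * β) - (b + w₂ * β))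
      = (w₁ - w₂) ^ 2 * (α * β) := by ring
    _ ≤ 0 := mul_nonpos_of_nonneg_of_nonpos (sq_nonneg _) h

section Mixture

variable {ι : Type*}

theorem sum_mix_eq (s : Finset ι) (u : ℝ) (y : ι → ℝ) :
    ∑ j ∈ s, (u * y j + (1 - u) * (1 - y j))
      = ((#s : ℝ) - ∑ j ∈ s, y j) + u * (2 * ∑ j ∈ s, y j - #s) := by
  simp only [sum_add_distrib, ← mul_sum, sum_sub_distrib, sum_const, nsmul_eq_mul, mul_one]
  ring

theorem sum_mix_eq_of_antipodal {y x : ι → ℝ} (hy : y = x ∨ y = fun j => 1 - x j) (u : ℝ) :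
    ∃ w : ℝ, ∀ s : Finset ι, ∑ j ∈ s, (u * y j + (1 - u) * (1 - y j))
      = ((#s : ℝ) - ∑ j ∈ s, x j) + w * (2 * ∑ j ∈ s, x j - #s) := by
  rcases hy with rfl | rfl
  · exact ⟨u, fun s => sum_mix_eq s u y⟩
  · refine ⟨1 - u, fun s => ?_⟩
    rw [← sum_mix_eq]
    exact sum_congr rfl fun j _ => by ring

end Mixture

theorem sum_eq_card_filter_of_zero_or_one {ι : Type*} {x : ι → ℝ} (hx : ∀ j, x j = 0 ∨ x j = 1)
    (s : Finset ι) : ∑ j ∈ s, x j = #{j ∈ s | x j = 1} := by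
  rw [← sum_boole]
  exact sum_congr rfl fun j _ => by rcases hx j with h | h <;> simp [h]

theorem balance_mul_balance_compl_nonpos {ι : Type*} [Fintype ι] [DecidableEq ι] {x : ι → ℝ}
    (hx : ∀ j, x j = 0 ∨ x j = 1) (hsum : ∑ j, x j = (Fintype.card ι / 2 : ℕ)) (s : Finset ι) :
    (2 * ∑ j ∈ s, x j - #s) * (2 * ∑ j ∈ sᶜ, x j - #sᶜ) ≤ 0 := by
  have hnat : #{j ∈ s | x j = 1} + #{j ∈ sᶜ | x j = 1} = Fintype.card ι / 2 := by
    have h := sum_add_sum_compl s x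
    rw [hsum, sum_eq_card_filter_of_zero_or_one hx, sum_eq_card_filter_of_zero_or_one hx] at h
    exact_mod_cast h
  have hcard := card_add_card_compl s
  rw [sum_eq_card_filter_of_zero_or_one hx, sum_eq_card_filter_of_zero_or_one hx]
  exact_mod_cast Int.mul_nonpos_of_neg_one_le_add
    (a := 2 * #{j ∈ s | x j = 1} - #s) (b := 2 * #{j ∈ sᶜ | x j = 1} - #sᶜ) (by omega) (by omega)

theorem ae_eq_or_eq_of_measure_eq_half {Ω E : Type*} [MeasurableSpace Ω] [MeasurableSpace E]
    [MeasurableSingletonClass E] {μ : Measure Ω} [IsProbabilityMeasure μ] {X : Ω → E}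
    (hX : Measurable X) {a b : E} (hab : a ≠ b)
    (ha : μ {ω | X ω = a} = 1 / 2) (hb : μ {ω | X ω = b} = 1 / 2) :
    ∀ᵐ ω ∂μ, X ω = a ∨ X ω = b := by
  have hmeas : ∀ c : E, MeasurableSet {ω | X ω = c} := fun c => hX (measurableSet_singleton c)
  have hdisj : Disjoint {ω | X ω = a} {ω | X ω = b} :=
    Set.disjoint_left.2 fun ω ha hb => hab (ha.symm.trans hb)
  change ∀ᵐ ω ∂μ, ω ∈ {ω | X ω = a} ∪ {ω | X ω = b}
  rw [ae_mem_iff_measure_eq ((hmeas a).union (hmeas b)).nullMeasurableSet, measure_univ,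
    measure_union hdisj (hmeas b), ha, hb, ENNReal.add_halves]

theorem stmt_9_general {Ω : Type*} [MeasurableSpace Ω] (μ : Measure Ω) [IsProbabilityMeasure μ]
    (d : ℕ) (X : Ω → Fin d → ℝ) (U : Ω → ℝ) (x : Fin d → ℝ)
    (hmX : Measurable X)
    (hx01 : ∀ j, x j = 0 ∨ x j = 1)
    (hxsum : ∑ j, x j = (d / 2 : ℕ))
    (hXx : μ {ω | X ω = x} = 1/2)
    (hXxc : μ {ω | X ω = fun j => 1 - x j} = 1/2) :
    ∀ I : Finset (Fin d),
      (μ.prod μ) {p : Ω × Ω |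
        ((∑ j ∈ I, (U p.1 * X p.1 j + (1 - U p.1) * (1 - X p.1 j)))
          - (∑ j ∈ I, (U p.2 * X p.2 j + (1 - U p.2) * (1 - X p.2 j))))
        * ((∑ j ∈ Iᶜ, (U p.1 * X p.1 j + (1 - U p.1) * (1 - X p.1 j)))
          - (∑ j ∈ Iᶜ, (U p.2 * X p.2 j + (1 - U p.2) * (1 - X p.2 j)))) ≤ 0} = 1 := by
  intro I
  have hne : x ≠ fun j => 1 - x j := by
    intro h
    have : IsEmpty (Fin d) := ⟨fun j => by
      have hj := congrFun h j
      rcases hx01 j with h' | h' <;> rw [h'] at hj <;> norm_num at hj⟩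
    simp only [Subsingleton.elim _ x, Set.ofPred_true, measure_univ] at hXx
    exact (ENNReal.half_lt_self one_ne_zero ENNReal.one_ne_top).ne' hXx
  have hX := ae_eq_or_eq_of_measure_eq_half hmX hne hXx hXxc
  have hsign := balance_mul_balance_compl_nonpos hx01 (by simpa using hxsum) I
  have hgood : ∀ᵐ p ∂μ.prod μ, (X p.1 = x ∨ X p.1 = fun j => 1 - x j) ∧
      (X p.2 = x ∨ X p.2 = fun j => 1 - x j) :=
    (Measure.quasiMeasurePreserving_fst.ae hX).and (Measure.quasiMeasurePreserving_snd.ae hX)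
  rw [← measure_univ (μ := μ.prod μ)]
  refine measure_congr (Filter.eventuallyEq_univ.2 ?_)
  filter_upwards [hgood] with p ⟨h₁, h₂⟩
  obtain ⟨w₁, hw₁⟩ := sum_mix_eq_of_antipodal h₁ (U p.1)
  obtain ⟨w₂, hw₂⟩ := sum_mix_eq_of_antipodal h₂ (U p.2)
  rw [hw₁, hw₁, hw₂, hw₂]
  exact sub_mul_sub_nonpos_of_affine w₁ w₂ hsign

/-- let X be a symmetric Bernoulli random vector supported on two
antipodal points {x, 1_d - x}, each with probability 1/2, where the components of x
sum to ⌊d/2⌋. Let U be standard uniform independent of X and V = U X + (1-U)(1_d - X).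
Then for every index set I, the pair (Σ_{j∈I} V_j, Σ_{j∉I} V_j) is countermonotonic
(formulated via independent copies on the product space): V is Σ-countermonotonic. -/
theorem stmt_9 {Ω : Type*} [MeasurableSpace Ω] (μ : Measure Ω) [IsProbabilityMeasure μ]
    (d : ℕ) (X : Ω → Fin d → ℝ) (U : Ω → ℝ) (x : Fin d → ℝ)
    (hmX : Measurable X) (hmU : Measurable U)
    (hx01 : ∀ j, x j = 0 ∨ x j = 1)
    (hxsum : ∑ j, x j = (d / 2 : ℕ))
    (hXx : μ {ω | X ω = x} = 1/2)
    (hXxc : μ {ω | X ω = fun j => 1 - x j} = 1/2)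
    (hU : Measure.map U μ = volume.restrict (Set.Icc (0:ℝ) 1))
    (hInd : IndepFun U X μ) :
    ∀ I : Finset (Fin d),
      (μ.prod μ) {p : Ω × Ω |
        ((∑ j ∈ I, (U p.1 * X p.1 j + (1 - U p.1) * (1 - X p.1 j)))
          - (∑ j ∈ I, (U p.2 * X p.2 j + (1 - U p.2) * (1 - X p.2 j))))
        * ((∑ j ∈ Iᶜ, (U p.1 * X p.1 j + (1 - U p.1) * (1 - X p.1 j)))
          - (∑ j ∈ Iᶜ, (U p.2 * X p.2 j + (1 - U p.2) * (1 - X p.2 j)))) ≤ 0} = 1 :=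
  stmt_9_general μ d X U x hmX hx01 hxsum hXx hXxc
end

section
/- Let X and Y be Bernoulli random variables with means p and q respectively, jointly distributed. Then the Pearson correlation of (X,Y) equals Kendall's tau of (X,Y) divided by 2√(p(1-p)q(1-q)). -/
/-! For 0/1-valued variables the product `(X - X') * (Y - Y')` only takes the values -1, 0, 1,
so Kendall's tau is its expectation under `μ ⊗ μ`, which expands to `2 * cov[X, Y]`; and a
Bernoulli(p) variable has variance `p * (1 - p)`. -/

open MeasureTheory ProbabilityTheory

lemma eq_indicator_of_zero_or_one {α : Type*} {X : α → ℝ} (hX : ∀ a, X a = 0 ∨ X a = 1) :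
    X = {a | X a = 1}.indicator 1 := by
  ext a
  rcases hX a with h | h <;> simp [Set.indicator, h]

section

variable {Ω : Type*} [MeasurableSpace Ω] {μ : Measure Ω}

section ZeroOne

variable {X : Ω → ℝ}

lemma integral_eq_measureReal_of_zero_or_one (hmX : Measurable X)
    (hX : ∀ ω, X ω = 0 ∨ X ω = 1) : μ[X] = μ.real {ω | X ω = 1} := by
  have hs : MeasurableSet {ω | X ω = 1} := hmX (measurableSet_singleton 1)
  conv_lhs => rw [eq_indicator_of_zero_or_one hX]
  exact integral_indicator_one hs

lemma memLp_of_zero_or_one [IsFiniteMeasure μ] (hmX : Measurable X)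
    (hX : ∀ ω, X ω = 0 ∨ X ω = 1) (p : ENNReal) : MemLp X p μ :=
  MemLp.of_bound hmX.aestronglyMeasurable 1 <| ae_of_all _ fun ω => by
    rcases hX ω with h | h <;> simp [h]

lemma variance_of_zero_or_one [IsProbabilityMeasure μ] (hmX : Measurable X)
    (hX : ∀ ω, X ω = 0 ∨ X ω = 1) : Var[X; μ] = μ[X] * (1 - μ[X]) := by
  have hsq : X ^ 2 = X := by
    ext ω
    rcases hX ω with h | h <;> simp [h]
  rw [variance_eq_sub (memLp_of_zero_or_one hmX hX 2), hsq]
  ring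

end ZeroOne

lemma integral_eq_measureReal_pos_sub_neg [IsFiniteMeasure μ] {Z : Ω → ℝ} (hmZ : Measurable Z)
    (hZ : ∀ ω, Z ω = -1 ∨ Z ω = 0 ∨ Z ω = 1) :
    μ[Z] = μ.real {ω | 0 < Z ω} - μ.real {ω | Z ω < 0} := by
  have hpos : MeasurableSet {ω | 0 < Z ω} := measurableSet_lt measurable_const hmZ
  have hneg : MeasurableSet {ω | Z ω < 0} := measurableSet_lt hmZ measurable_const
  have hsplit : Z = {ω | 0 < Z ω}.indicator 1 - {ω | Z ω < 0}.indicator 1 := by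
    ext ω
    rcases hZ ω with h | h | h <;> norm_num [Set.indicator, h]
  conv_lhs => rw [hsplit]
  rw [integral_sub' ((integrable_const 1).indicator hpos)
    ((integrable_const 1).indicator hneg), integral_indicator_one hpos, integral_indicator_one hneg]

lemma integral_prod_sub_mul_sub [IsProbabilityMeasure μ] {X Y : Ω → ℝ} (hX : MemLp X 2 μ)
    (hY : MemLp Y 2 μ) :
    ∫ z, (X z.1 - X z.2) * (Y z.1 - Y z.2) ∂μ.prod μ = 2 * cov[X, Y; μ] := by
  have hXY : Integrable (X * Y) μ := hX.integrable_mul hY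
  have hX1 : Integrable X μ := hX.integrable one_le_two
  have hY1 : Integrable Y μ := hY.integrable one_le_two
  have hdiag₁ := hXY.comp_fst μ
  have hdiag₂ := hXY.comp_snd μ
  have hcross₁ := hX1.mul_prod hY1
  have hcross₂ := hY1.mul_prod hX1
  have hexpand : (fun z : Ω × Ω => (X z.1 - X z.2) * (Y z.1 - Y z.2)) =
      fun z => ((X * Y) z.1 + (X * Y) z.2) - (X z.1 * Y z.2 + Y z.1 * X z.2) := by
    ext z
    simp only [Pi.mul_apply]
    ring
  rw [hexpand, integral_sub (hdiag₁.fun_add hdiag₂) (hcross₁.fun_add hcross₂),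
    integral_add hdiag₁ hdiag₂, integral_add hcross₁ hcross₂, integral_fun_fst, integral_fun_snd,
    integral_prod_mul, integral_prod_mul, covariance_eq_sub hX hY]
  simp only [probReal_univ, one_smul]
  ring

lemma sub_mul_sub_eq_neg_one_or_zero_or_one {a b c d : ℝ} (ha : a = 0 ∨ a = 1)
    (hb : b = 0 ∨ b = 1) (hc : c = 0 ∨ c = 1) (hd : d = 0 ∨ d = 1) :
    (a - b) * (c - d) = -1 ∨ (a - b) * (c - d) = 0 ∨ (a - b) * (c - d) = 1 := by
  rcases ha with rfl | rfl <;> rcases hb with rfl | rfl <;> rcases hc with rfl | rfl <;>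
    rcases hd with rfl | rfl <;> norm_num

end

theorem stmt_10_general {Ω : Type*} [MeasurableSpace Ω] (μ : Measure Ω) [IsProbabilityMeasure μ]
    (X Y : Ω → ℝ) (p q : ℝ)
    (hmX : Measurable X) (hmY : Measurable Y)
    (hX01 : ∀ ω, X ω = 0 ∨ X ω = 1) (hY01 : ∀ ω, Y ω = 0 ∨ Y ω = 1)
    (hXp : (μ {ω | X ω = 1}).toReal = p) (hYq : (μ {ω | Y ω = 1}).toReal = q) :
    ((∫ ω, X ω * Y ω ∂μ) - (∫ ω, X ω ∂μ) * (∫ ω, Y ω ∂μ))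
        / Real.sqrt (variance X μ * variance Y μ)
      = (((μ.prod μ) {ω : Ω × Ω | (X ω.1 - X ω.2) * (Y ω.1 - Y ω.2) > 0}).toReal
          - ((μ.prod μ) {ω : Ω × Ω | (X ω.1 - X ω.2) * (Y ω.1 - Y ω.2) < 0}).toReal)
        / (2 * Real.sqrt (p * (1 - p) * q * (1 - q))) := by
  have hX2 := memLp_of_zero_or_one (μ := μ) hmX hX01 2
  have hY2 := memLp_of_zero_or_one (μ := μ) hmY hY01 2
  have hmeanX : μ[X] = p := (integral_eq_measureReal_of_zero_or_one hmX hX01).trans hXp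
  have hmeanY : μ[Y] = q := (integral_eq_measureReal_of_zero_or_one hmY hY01).trans hYq
  have hcov : (∫ ω, X ω * Y ω ∂μ) - (∫ ω, X ω ∂μ) * (∫ ω, Y ω ∂μ) = cov[X, Y; μ] :=
    (covariance_eq_sub hX2 hY2).symm
  have hkendall : ((μ.prod μ) {ω : Ω × Ω | (X ω.1 - X ω.2) * (Y ω.1 - Y ω.2) > 0}).toReal
      - ((μ.prod μ) {ω : Ω × Ω | (X ω.1 - X ω.2) * (Y ω.1 - Y ω.2) < 0}).toReal
      = 2 * cov[X, Y; μ] := by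
    rw [← integral_prod_sub_mul_sub hX2 hY2, integral_eq_measureReal_pos_sub_neg (by fun_prop)
      fun z => sub_mul_sub_eq_neg_one_or_zero_or_one (hX01 _) (hX01 _) (hY01 _) (hY01 _)]
    rfl
  rw [hcov, hkendall, variance_of_zero_or_one hmX hX01, variance_of_zero_or_one hmY hY01,
    hmeanX, hmeanY, mul_div_mul_left _ _ two_ne_zero, ← mul_assoc]

/-- for jointly distributed Bernoulli random variables X, Y with means
p, q in (0,1), Pearson's correlation equals Kendall's tau divided by 2√(p(1-p)q(1-q)). -/
theorem stmt_10 {Ω : Type*} [MeasurableSpace Ω] (μ : Measure Ω) [IsProbabilityMeasure μ]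
    (X Y : Ω → ℝ) (p q : ℝ)
    (hp : 0 < p) (hp1 : p < 1) (hq : 0 < q) (hq1 : q < 1)
    (hmX : Measurable X) (hmY : Measurable Y)
    (hX01 : ∀ ω, X ω = 0 ∨ X ω = 1) (hY01 : ∀ ω, Y ω = 0 ∨ Y ω = 1)
    (hXp : (μ {ω | X ω = 1}).toReal = p) (hYq : (μ {ω | Y ω = 1}).toReal = q) :
    ((∫ ω, X ω * Y ω ∂μ) - (∫ ω, X ω ∂μ) * (∫ ω, Y ω ∂μ))
        / Real.sqrt (variance X μ * variance Y μ)
      = (((μ.prod μ) {ω : Ω × Ω | (X ω.1 - X ω.2) * (Y ω.1 - Y ω.2) > 0}).toReal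
          - ((μ.prod μ) {ω : Ω × Ω | (X ω.1 - X ω.2) * (Y ω.1 - Y ω.2) < 0}).toReal)
        / (2 * Real.sqrt (p * (1 - p) * q * (1 - q))) :=
  stmt_10_general μ X Y p q hmX hmY hX01 hY01 hXp hYq
end

section
/- Let X be in SB_d, U standard uniform independent of X, and V = U X + (1-U)(1_d - X). Then for all j1 ≠ j2, the Pearson correlation ρ_P(V_{j1}, V_{j2}) equals ρ_P(X_{j1}, X_{j2}). -/
/-!
Write `W = 2U - 1`. Then `V_j = 1/2 + W (X_j - 1/2)`, and `X_j - 1/2` is centred because `X_j` is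
a fair coin. Pearson correlation ignores additive constants, and multiplying two centred variables
by a common factor `W` independent of them multiplies their covariance and both variances by
`E[W²] > 0`, which cancels in the correlation.
-/

open MeasureTheory ProbabilityTheory

/-- Pearson correlation of two real random variables. -/
noncomputable def pearson {Ω : Type*} [MeasurableSpace Ω] (μ : Measure Ω)
    (A B : Ω → ℝ) : ℝ :=
  ((∫ ω, A ω * B ω ∂μ) - (∫ ω, A ω ∂μ) * (∫ ω, B ω ∂μ))
    / Real.sqrt (variance A μ * variance B μ)

section Pearson

variable {Ω : Type*} [MeasurableSpace Ω] {μ : Measure Ω} {A B W : Ω → ℝ}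

lemma pearson_eq_covariance_div [IsProbabilityMeasure μ] (hA : MemLp A 2 μ) (hB : MemLp B 2 μ) :
    pearson μ A B = cov[A, B; μ] / Real.sqrt (Var[A; μ] * Var[B; μ]) := by
  rw [pearson, covariance_eq_sub hA hB]
  rfl

lemma pearson_of_integral_eq_zero (hA : μ[A] = 0) (hB : μ[B] = 0) :
    pearson μ A B = cov[A, B; μ] / Real.sqrt (Var[A; μ] * Var[B; μ]) := by
  simp [pearson, covariance, hA, hB]

lemma pearson_add_const [IsProbabilityMeasure μ] (hA : MemLp A 2 μ) (hB : MemLp B 2 μ)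
    (a b : ℝ) : pearson μ (fun ω ↦ A ω + a) (fun ω ↦ B ω + b) = pearson μ A B := by
  have hAa : MemLp (fun ω ↦ A ω + a) 2 μ := hA.add (memLp_const a)
  have hBb : MemLp (fun ω ↦ B ω + b) 2 μ := hB.add (memLp_const b)
  rw [pearson_eq_covariance_div hAa hBb, pearson_eq_covariance_div hA hB,
    covariance_add_const_left (hA.integrable one_le_two),
    covariance_add_const_right (hB.integrable one_le_two),
    variance_add_const hA.aestronglyMeasurable, variance_add_const hB.aestronglyMeasurable]

lemma integral_mul_eq_zero_of_indepFun (hind : IndepFun W A μ) (hW : AEMeasurable W μ)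
    (hA : AEMeasurable A μ) (hA0 : μ[A] = 0) : ∫ ω, W ω * A ω ∂μ = 0 := by
  rw [hind.integral_fun_mul_eq_mul_integral hW.aestronglyMeasurable hA.aestronglyMeasurable, hA0,
    mul_zero]

lemma covariance_mul_of_indepFun (hind : IndepFun W (fun ω ↦ (A ω, B ω)) μ)
    (hW : AEMeasurable W μ) (hA : AEMeasurable A μ) (hB : AEMeasurable B μ)
    (hA0 : μ[A] = 0) (hB0 : μ[B] = 0) :
    cov[fun ω ↦ W ω * A ω, fun ω ↦ W ω * B ω; μ]
      = (∫ ω, W ω ^ 2 ∂μ) * cov[A, B; μ] := by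
  have hWA : ∫ ω, W ω * A ω ∂μ = 0 :=
    integral_mul_eq_zero_of_indepFun (hind.comp measurable_id measurable_fst) hW hA hA0
  have hWB : ∫ ω, W ω * B ω ∂μ = 0 :=
    integral_mul_eq_zero_of_indepFun (hind.comp measurable_id measurable_snd) hW hB hB0
  have hind' : IndepFun (fun ω ↦ W ω ^ 2) (fun ω ↦ A ω * B ω) μ :=
    hind.comp (measurable_id.pow_const 2) (measurable_fst.mul measurable_snd)
  simp only [covariance, hWA, hWB, hA0, hB0, sub_zero]
  rw [← hind'.integral_fun_mul_eq_mul_integral (hW.pow_const 2).aestronglyMeasurable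
    (hA.mul hB).aestronglyMeasurable]
  congr 1 with ω
  ring

lemma variance_mul_of_indepFun (hind : IndepFun W A μ) (hW : AEMeasurable W μ)
    (hA : AEMeasurable A μ) (hA0 : μ[A] = 0) :
    Var[fun ω ↦ W ω * A ω; μ] = (∫ ω, W ω ^ 2 ∂μ) * Var[A; μ] := by
  rw [← covariance_self (X := fun ω ↦ W ω * A ω) (hW.mul hA), ← covariance_self hA]
  exact covariance_mul_of_indepFun (hind.comp measurable_id (measurable_id.prodMk measurable_id))
    hW hA hA hA0 hA0

lemma pearson_mul_of_indepFun (hind : IndepFun W (fun ω ↦ (A ω, B ω)) μ)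
    (hW : AEMeasurable W μ) (hA : AEMeasurable A μ) (hB : AEMeasurable B μ)
    (hA0 : μ[A] = 0) (hB0 : μ[B] = 0) (hW2 : 0 < ∫ ω, W ω ^ 2 ∂μ) :
    pearson μ (fun ω ↦ W ω * A ω) (fun ω ↦ W ω * B ω) = pearson μ A B := by
  have hindA : IndepFun W A μ := hind.comp measurable_id measurable_fst
  have hindB : IndepFun W B μ := hind.comp measurable_id measurable_snd
  rw [pearson_of_integral_eq_zero (integral_mul_eq_zero_of_indepFun hindA hW hA hA0)
      (integral_mul_eq_zero_of_indepFun hindB hW hB hB0),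
    pearson_of_integral_eq_zero hA0 hB0, covariance_mul_of_indepFun hind hW hA hB hA0 hB0,
    variance_mul_of_indepFun hindA hW hA hA0, variance_mul_of_indepFun hindB hW hB hB0,
    mul_mul_mul_comm, Real.sqrt_mul (mul_self_nonneg _), Real.sqrt_mul_self hW2.le,
    mul_div_mul_left _ _ hW2.ne']

end Pearson
section Uniform

variable {Ω : Type*} [MeasurableSpace Ω] {μ : Measure Ω} {U : Ω → ℝ}

lemma ae_mem_Icc_of_map_eq_restrict_Icc {a b : ℝ} (hU : AEMeasurable U μ)
    (hmap : μ.map U = volume.restrict (Set.Icc a b)) : ∀ᵐ ω ∂μ, U ω ∈ Set.Icc a b := by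
  refine (ae_map_iff hU measurableSet_Icc).1 ?_
  rw [hmap]
  exact ae_restrict_mem measurableSet_Icc

lemma integral_comp_of_map_eq_restrict_Icc {a b : ℝ} (hU : AEMeasurable U μ)
    (hmap : μ.map U = volume.restrict (Set.Icc a b)) (hab : a ≤ b) {f : ℝ → ℝ}
    (hf : Measurable f) : ∫ ω, f (U ω) ∂μ = ∫ x in a..b, f x := by
  rw [← integral_map hU hf.aestronglyMeasurable, hmap, integral_Icc_eq_integral_Ioc,
    ← intervalIntegral.integral_of_le hab]

lemma ae_norm_two_mul_sub_one_le_one (hU : AEMeasurable U μ)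
    (hmap : μ.map U = volume.restrict (Set.Icc 0 1)) :
    ∀ᵐ ω ∂μ, ‖2 * U ω - 1‖ ≤ 1 := by
  filter_upwards [ae_mem_Icc_of_map_eq_restrict_Icc hU hmap] with ω hω
  rw [Real.norm_eq_abs, abs_le]
  constructor <;> linarith [hω.1, hω.2]

lemma integral_two_mul_sub_one_sq (hU : AEMeasurable U μ)
    (hmap : μ.map U = volume.restrict (Set.Icc 0 1)) :
    ∫ ω, (2 * U ω - 1) ^ 2 ∂μ = 1 / 3 := by
  rw [integral_comp_of_map_eq_restrict_Icc (f := fun x ↦ (2 * x - 1) ^ 2) hU hmap zero_le_one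
    (by fun_prop)]
  norm_num [intervalIntegral.integral_comp_mul_sub (fun x : ℝ ↦ x ^ 2)]

end Uniform

section ZeroOne

variable {Ω : Type*} [MeasurableSpace Ω] {μ : Measure Ω} {Y : Ω → ℝ}

lemma norm_sub_half_le_of_zero_or_one {x : ℝ} (hx : x = 0 ∨ x = 1) :
    ‖x - 1 / 2‖ ≤ 1 / 2 := by
  rcases hx with rfl | rfl <;> norm_num

lemma integral_eq_measureReal_of_zero_or_one_s13 (hY : Measurable Y)
    (h01 : ∀ ω, Y ω = 0 ∨ Y ω = 1) :
    ∫ ω, Y ω ∂μ = μ.real {ω | Y ω = 1} := by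
  have hs : MeasurableSet {ω | Y ω = 1} := hY (measurableSet_singleton 1)
  rw [← integral_indicator_one hs]
  refine integral_congr_ae (.of_forall fun ω ↦ ?_)
  rcases h01 ω with h | h <;> simp [h]

lemma integral_sub_half_eq_zero_of_zero_or_one [IsProbabilityMeasure μ] (hY : Measurable Y)
    (h01 : ∀ ω, Y ω = 0 ∨ Y ω = 1) (hY1 : μ {ω | Y ω = 1} = 1 / 2) :
    ∫ ω, (Y ω - 1 / 2) ∂μ = 0 := by
  have hint : Integrable Y μ := .of_bound hY.aestronglyMeasurable 1 (.of_forall fun ω ↦ by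
    rcases h01 ω with h | h <;> simp [h])
  rw [integral_sub hint (integrable_const _), integral_eq_measureReal_of_zero_or_one_s13 hY h01,
    measureReal_def, hY1, integral_const]
  norm_num

end ZeroOne

/-- for X symmetric Bernoulli, U standard uniform independent of X, and
V = U X + (1-U)(1_d - X), the Pearson correlation of (V_{j1}, V_{j2}) equals that of
(X_{j1}, X_{j2}) for all j1 ≠ j2. -/
theorem stmt_13 {Ω : Type*} [MeasurableSpace Ω] (μ : Measure Ω) [IsProbabilityMeasure μ]
    (d : ℕ) (X : Ω → Fin d → ℝ) (U : Ω → ℝ)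
    (hmX : Measurable X) (hmU : Measurable U)
    (hX01 : ∀ ω j, X ω j = 0 ∨ X ω j = 1)
    (hBer : ∀ j, μ {ω | X ω j = 1} = 1/2)
    (hU : Measure.map U μ = volume.restrict (Set.Icc (0:ℝ) 1))
    (hInd : IndepFun U X μ) :
    ∀ j1 j2 : Fin d, j1 ≠ j2 →
      pearson μ (fun ω => U ω * X ω j1 + (1 - U ω) * (1 - X ω j1))
          (fun ω => U ω * X ω j2 + (1 - U ω) * (1 - X ω j2))
        = pearson μ (fun ω => X ω j1) (fun ω => X ω j2) := by
  intro j1 j2 _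
  set W : Ω → ℝ := fun ω ↦ 2 * U ω - 1
  set A : Fin d → Ω → ℝ := fun j ω ↦ X ω j - 1 / 2
  have hA_le (j : Fin d) (ω : Ω) : ‖A j ω‖ ≤ 1 / 2 :=
    norm_sub_half_le_of_zero_or_one (hX01 ω j)
  have hmemA (j : Fin d) : MemLp (A j) 2 μ := .of_bound (by fun_prop) _ (.of_forall (hA_le j))
  have hmemWA (j : Fin d) : MemLp (fun ω ↦ W ω * A j ω) 2 μ := by
    refine .of_bound (by fun_prop) (1 * (1 / 2)) ?_
    filter_upwards [ae_norm_two_mul_sub_one_le_one hmU.aemeasurable hU] with ω hω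
    rw [norm_mul]
    exact mul_le_mul hω (hA_le j ω) (norm_nonneg _) zero_le_one
  have hA0 (j : Fin d) : μ[A j] = 0 :=
    integral_sub_half_eq_zero_of_zero_or_one (by fun_prop) (hX01 · j) (hBer j)
  have hW2 : 0 < ∫ ω, W ω ^ 2 ∂μ := by
    rw [integral_two_mul_sub_one_sq hmU.aemeasurable hU]
    norm_num
  have hind : IndepFun W (fun ω ↦ (A j1 ω, A j2 ω)) μ :=
    hInd.comp (φ := fun u ↦ 2 * u - 1)
      (ψ := fun x : Fin d → ℝ ↦ (x j1 - 1 / 2, x j2 - 1 / 2)) (by fun_prop) (by fun_prop)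
  have hV (j : Fin d) : (fun ω ↦ U ω * X ω j + (1 - U ω) * (1 - X ω j))
      = fun ω ↦ W ω * A j ω + 1 / 2 := funext fun ω ↦ by ring
  have hX (j : Fin d) : (fun ω ↦ X ω j) = fun ω ↦ A j ω + 1 / 2 := funext fun ω ↦ by ring
  rw [hV, hV, hX, hX, pearson_add_const (hmemWA j1) (hmemWA j2),
    pearson_add_const (hmemA j1) (hmemA j2),
    pearson_mul_of_indepFun hind (by fun_prop) (by fun_prop) (by fun_prop) (hA0 j1) (hA0 j2) hW2]
end

section
/- For d odd, define M_d = (d-1)/2, m_d = (d+1)/2, and let I*_{d-1} be the set of binary vectors i in {0,1}^{d-1} whose components sum to M_d or m_d. Let A_d be the matrix whose columns are indexed by i ∈ I*_{d-1}, with rows: R_1 the indicator of Σ i_h = M_d, R_2 the indicator of Σ i_h = m_d, followed by the d-1 rows (i_j)_{i ∈ I*_{d-1}} for j = 1,...,d-1. Then rank(A_d) = d for all odd d ≥ 3. -/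
/-!
The rows of `A_d` satisfy one linear relation: for a column `i` of weight `|i|`, the row
combination `a • R₁ + b • R₂ - ∑ⱼ (row j)` takes the value `a - |i|` or `b - |i|`, which vanishes
since `|i| ∈ {a, b}`. Conversely, in a left kernel vector all coordinate-row weights coincide
(compare two columns of weight `a` differing by a swap of `j` and `k`), after which the columns of
weight `a` and `b` pin down the weights of `R₁` and `R₂`. So the left kernel is a line and the rank
is `(n + 2) - 1 = n + 1`, with `n = d - 1`, `a = (d - 1) / 2`, `b = (d + 1) / 2`.
-/

open Finset Matrix

def nOnes {n : ℕ} (i : Fin n → Bool) : ℕ :=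
  (univ.filter (fun j => i j = true)).card

def twoLayerMatrix (n a b : ℕ) :
    Matrix (Fin 2 ⊕ Fin n) {i : Fin n → Bool // nOnes i = a ∨ nOnes i = b} ℚ :=
  Matrix.of fun r c =>
    Sum.elim
      (fun k : Fin 2 =>
        if k = 0 then (if nOnes c.val = a then (1 : ℚ) else 0)
        else (if nOnes c.val = b then (1 : ℚ) else 0))
      (fun j : Fin n => if c.val j then (1 : ℚ) else 0) r

lemma nOnes_decide_mem {n : ℕ} (S : Finset (Fin n)) :
    nOnes (fun j => decide (j ∈ S)) = #S := by
  simp [nOnes]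

namespace twoLayerMatrix

variable {n a b : ℕ}

lemma vecMul_apply (w : Fin 2 ⊕ Fin n → ℚ)
    (c : {i : Fin n → Bool // nOnes i = a ∨ nOnes i = b}) :
    (w ᵥ* twoLayerMatrix n a b) c =
      (if nOnes c.val = a then w (.inl 0) else 0) + (if nOnes c.val = b then w (.inl 1) else 0)
        + ∑ j with c.val j, w (.inr j) := by
  simp only [vecMul, dotProduct, twoLayerMatrix, of_apply, Fintype.sum_sum_type,
    Fin.sum_univ_two, Sum.elim_inl, Sum.elim_inr, sum_filter]
  simp [mul_ite]

lemma vecMul_apply_indicator (w : Fin 2 ⊕ Fin n → ℚ) (S : Finset (Fin n))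
    (hS : #S = a ∨ #S = b) :
    (w ᵥ* twoLayerMatrix n a b) ⟨fun j => decide (j ∈ S), by rwa [nOnes_decide_mem]⟩ =
      (if #S = a then w (.inl 0) else 0) + (if #S = b then w (.inl 1) else 0)
        + ∑ j ∈ S, w (.inr j) := by
  simp [vecMul_apply, nOnes_decide_mem]

def layerRelation (n a b : ℕ) : Fin 2 ⊕ Fin n → ℚ :=
  Sum.elim ![(a : ℚ), b] (fun _ => -1)

lemma layerRelation_vecMul (hab : a ≠ b) : layerRelation n a b ᵥ* twoLayerMatrix n a b = 0 := by
  funext c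
  rw [vecMul_apply]
  have hcard : ∑ j with c.val j, layerRelation n a b (.inr j) = -(nOnes c.val : ℚ) := by
    simp [layerRelation, nOnes]
  rw [hcard]
  rcases c.prop with h | h <;> simp [h, hab, hab.symm, layerRelation]

variable {w : Fin 2 ⊕ Fin n → ℚ}

lemma vecMul_eq_zero_indicator (hw : w ᵥ* twoLayerMatrix n a b = 0) (S : Finset (Fin n))
    (hS : #S = a ∨ #S = b) :
    (if #S = a then w (.inl 0) else 0) + (if #S = b then w (.inl 1) else 0)
      + ∑ j ∈ S, w (.inr j) = 0 := by
  rw [← vecMul_apply_indicator w S hS, hw, Pi.zero_apply]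

/-- Exchanging `j` and `k` in a set of size `a` shows that a left kernel vector is constant on
the coordinate rows. -/
lemma inr_eq_of_vecMul_eq_zero (ha0 : 0 < a) (han : a < n) (hab : a ≠ b)
    (hw : w ᵥ* twoLayerMatrix n a b = 0) (j k : Fin n) : w (.inr j) = w (.inr k) := by
  obtain rfl | hjk := eq_or_ne j k
  · rfl
  obtain ⟨S, hS, hScard⟩ := exists_subset_card_eq (s := univ \ {j, k}) (n := a - 1) (by
    rw [card_sdiff_of_subset (subset_univ _), card_pair hjk, card_univ, Fintype.card_fin]
    omega)
  have hj : j ∉ S := fun h => by simpa using hS h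
  have hk : k ∉ S := fun h => by simpa using hS h
  have hcard (i : Fin n) (hi : i ∉ S) : #(insert i S) = a := by
    rw [card_insert_of_notMem hi]; omega
  have ej := vecMul_eq_zero_indicator hw _ (.inl (hcard j hj))
  have ek := vecMul_eq_zero_indicator hw _ (.inl (hcard k hk))
  rw [sum_insert hj, hcard j hj] at ej
  rw [sum_insert hk, hcard k hk] at ek
  simp only [if_pos, if_neg hab] at ej ek
  linarith

lemma eq_smul_layerRelation_of_vecMul_eq_zero (ha0 : 0 < a) (han : a < n) (hbn : b ≤ n)
    (hab : a ≠ b) (hw : w ᵥ* twoLayerMatrix n a b = 0) (j₀ : Fin n) :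
    w = (-w (.inr j₀)) • layerRelation n a b := by
  have hsum (S : Finset (Fin n)) : ∑ j ∈ S, w (.inr j) = #S * w (.inr j₀) := by
    rw [sum_congr rfl fun j _ => inr_eq_of_vecMul_eq_zero ha0 han hab hw j j₀, sum_const,
      nsmul_eq_mul]
  obtain ⟨Sa, -, hSa⟩ := exists_subset_card_eq (s := (univ : Finset (Fin n))) (n := a)
    (by rw [card_fin]; omega)
  obtain ⟨Sb, -, hSb⟩ := exists_subset_card_eq (s := (univ : Finset (Fin n))) (n := b)
    (by rw [card_fin]; omega)
  have ea := vecMul_eq_zero_indicator hw Sa (.inl hSa)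
  have eb := vecMul_eq_zero_indicator hw Sb (.inr hSb)
  rw [hsum, hSa] at ea
  rw [hsum, hSb] at eb
  simp only [if_pos, if_neg hab, if_neg hab.symm] at ea eb
  funext r
  rcases r with k | j
  · fin_cases k <;> simp [layerRelation] <;> linarith
  · simp [layerRelation, inr_eq_of_vecMul_eq_zero ha0 han hab hw j j₀]

lemma ker_vecMulLinear (ha0 : 0 < a) (han : a < n) (hbn : b ≤ n) (hab : a ≠ b) :
    LinearMap.ker (twoLayerMatrix n a b).vecMulLinear = ℚ ∙ layerRelation n a b := by
  refine le_antisymm (fun w hw => ?_) ?_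
  · rw [Submodule.mem_span_singleton]
    exact ⟨_, (eq_smul_layerRelation_of_vecMul_eq_zero ha0 han hbn hab hw ⟨0, by omega⟩).symm⟩
  · rw [Submodule.span_singleton_le_iff_mem]
    exact layerRelation_vecMul hab

theorem rank_eq (ha0 : 0 < a) (han : a < n) (hbn : b ≤ n) (hab : a ≠ b) :
    (twoLayerMatrix n a b).rank = n + 1 := by
  have hv : layerRelation n a b ≠ 0 := fun h => by
    simpa [layerRelation] using congrFun h (.inr ⟨0, by omega⟩)
  have h := (twoLayerMatrix n a b).vecMulLinear.finrank_range_add_finrank_ker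
  rw [ker_vecMulLinear ha0 han hbn hab, finrank_span_singleton hv,
    Module.finrank_fintype_fun_eq_card, Fintype.card_sum, Fintype.card_fin, Fintype.card_fin,
    ← mulVecLin_transpose] at h
  rw [← rank_transpose, rank]
  omega

end twoLayerMatrix

theorem stmt_15_general (d : ℕ) (h3 : 3 ≤ d) :
    Matrix.rank
      (Matrix.of (fun (r : Fin 2 ⊕ Fin (d - 1))
          (c : {i : Fin (d - 1) → Bool // nOnes i = (d - 1) / 2 ∨ nOnes i = (d + 1) / 2}) =>
        Sum.elim
          (fun k : Fin 2 =>
            if k = 0 then (if nOnes c.val = (d - 1) / 2 then (1 : ℚ) else 0)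
            else (if nOnes c.val = (d + 1) / 2 then (1 : ℚ) else 0))
          (fun j : Fin (d - 1) => if c.val j then (1 : ℚ) else 0) r)) = d := by
  have h := twoLayerMatrix.rank_eq (n := d - 1) (a := (d - 1) / 2) (b := (d + 1) / 2)
    (by omega) (by omega) (by omega) (by omega)
  rw [Nat.sub_add_cancel (by omega)] at h
  exact h

/-- for odd d ≥ 3, the matrix A_d — with columns indexed by the binary
vectors i ∈ {0,1}^{d-1} whose components sum to M_d = (d-1)/2 or m_d = (d+1)/2, and
rows given by the indicator of Σ i_h = M_d, the indicator of Σ i_h = m_d, and the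
d-1 coordinate rows (i_j) — has rank d over ℚ. -/
theorem stmt_15 (d : ℕ) (hd : Odd d) (h3 : 3 ≤ d) :
    Matrix.rank
      (Matrix.of (fun (r : Fin 2 ⊕ Fin (d - 1))
          (c : {i : Fin (d - 1) → Bool // nOnes i = (d - 1) / 2 ∨ nOnes i = (d + 1) / 2}) =>
        Sum.elim
          (fun k : Fin 2 =>
            if k = 0 then (if nOnes c.val = (d - 1) / 2 then (1 : ℚ) else 0)
            else (if nOnes c.val = (d + 1) / 2 then (1 : ℚ) else 0))
          (fun j : Fin (d - 1) => if c.val j then (1 : ℚ) else 0) r)) = d :=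
  stmt_15_general d h3
end

section
/- The pmf f on {0,1}^5 defined by f((1,0,1,0,0)) = f((1,0,0,1,1)) = f((0,1,1,0,1)) = f((0,1,0,1,0)) = 1/4 (and 0 elsewhere) belongs to SB_5 and is a Σ_cx-smallest element of SB_5: its support lies in the set of binary vectors with component sum 2 or 3. -/
open Finset

/-- The pmf on {0,1}^5 putting mass 1/4 on each of (1,0,1,0,0), (1,0,0,1,1),
(0,1,1,0,1), (0,1,0,1,0). -/
noncomputable def f5 : (Fin 5 → Bool) → ℝ := fun y =>
  if y = ![true, false, true, false, false] ∨ y = ![true, false, false, true, true] ∨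
      y = ![false, true, true, false, true] ∨ y = ![false, true, false, true, false]
  then (1/4 : ℝ) else 0

/-! `f5` is the uniform pmf on four vectors, and every coordinate equals 1 in exactly two of them;
this balance is what makes every marginal Bernoulli(1/2). The support condition is a finite check
on the four vectors. -/

noncomputable def uniformOn {d : ℕ} (S : Finset (Fin d → Bool)) : (Fin d → Bool) → ℝ :=
  fun x => if x ∈ S then (#S : ℝ)⁻¹ else 0

lemma sum_uniformOn {d : ℕ} (S s : Finset (Fin d → Bool)) :
    ∑ x ∈ s, uniformOn S x = #(s ∩ S) / #S := by
  simp only [uniformOn, ← sum_filter, filter_mem_eq_inter, sum_const,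
    nsmul_eq_mul, div_eq_mul_inv]

lemma isSB_uniformOn {d : ℕ} (S : Finset (Fin d → Bool)) (hS : S.Nonempty)
    (hbalanced : ∀ h : Fin d, 2 * #(S.filter (fun x => x h = true)) = #S) :
    isSB d (uniformOn S) := by
  have hcard : (#S : ℝ) ≠ 0 := by exact_mod_cast hS.card_pos.ne'
  refine ⟨fun x => ?_, ?_, fun h => ?_⟩
  · unfold uniformOn
    split <;> positivity
  · rw [sum_uniformOn, univ_inter, div_self hcard]
  · rw [sum_uniformOn, filter_inter, univ_inter, div_eq_div_iff hcard two_ne_zero,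
      one_mul, mul_comm, ← Nat.cast_two, ← Nat.cast_mul, hbalanced]

lemma mem_of_uniformOn_ne_zero {d : ℕ} {S : Finset (Fin d → Bool)} {x : Fin d → Bool}
    (hx : uniformOn S x ≠ 0) : x ∈ S := by
  by_contra h
  exact hx (if_neg h)

def f5Support : Finset (Fin 5 → Bool) :=
  {![true, false, true, false, false], ![true, false, false, true, true],
    ![false, true, true, false, true], ![false, true, false, true, false]}

lemma sumC_eq_two_or_three_of_mem_f5Support :
    ∀ y ∈ f5Support, sumC y = 2 ∨ sumC y = 3 := by
  decide

lemma f5_eq_uniformOn : f5 = uniformOn f5Support := by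
  funext y
  simp only [f5, uniformOn, f5Support, mem_insert, mem_singleton]
  norm_num

/-- the pmf f5 belongs to SB_5 and is Σ_cx-smallest: its support is
contained in the binary vectors with component sum 2 or 3. -/
theorem stmt_18 :
    isSB 5 f5 ∧ ∀ y, f5 y ≠ 0 → sumC y = 2 ∨ sumC y = 3 := by
  rw [f5_eq_uniformOn]
  refine ⟨isSB_uniformOn _ ⟨_, mem_insert_self _ _⟩ (by decide), fun y hy => ?_⟩
  exact sumC_eq_two_or_three_of_mem_f5Support y (mem_of_uniformOn_ne_zero hy)
end
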